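/- Under the oracle APS procedure with exact conditional probabilities, the prediction set C(x, u, τ) = {y : ρ_x(y) + π_x(y)·u ≤ τ} with τ = 1 − α satisfies exact conditional coverage: P(Y ∈ C(X, U, 1−α) | X = x) = 1 − α for every x, where U is uniform on [0,1] independent of (X, Y). -/

import Mathlib

open MeasureTheory ProbabilityTheory

/-- Total conditional probability mass of labels strictly more likely than `y` at `x`. -/
noncomputable def probMassAbove {d K : ℕ} (π : (Fin d → ℝ) → Fin K → ℝ)
    (x : Fin d → ℝ) (y : Fin K) : ℝ :=
  ∑ y' : Fin K, if π x y < π x y' then π x y' else 0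

/-!
Given `(X, Y) = (x, y)`, the score `ρ_x(y) + π_x(y)·U` is uniform on
`[ρ_x(y), ρ_x(y) + π_x(y)]`, so it is at most `τ` with probability
`(min τ (ρ_x(y) + π_x(y)) - min τ ρ_x(y)) / π_x(y)`. Averaging over `Y` given `X = x`, with
weights `π_x(y)`, leaves `∑_y (min τ (ρ_x(y) + π_x(y)) - min τ ρ_x(y))`. Once the labels are
sorted by probability, the intervals `[ρ_x(y), ρ_x(y) + π_x(y)]` tile `[0, 1]`, so this sum
telescopes to `min τ 1 - min τ 0 = τ`.
-/

section Tiling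

variable {d K : ℕ} {π : (Fin d → ℝ) → Fin K → ℝ} {x : Fin d → ℝ}

lemma probMassAbove_add_self (hinj : Function.Injective (π x)) (y : Fin K) :
    probMassAbove π x y + π x y = ∑ y' : Fin K, if π x y ≤ π x y' then π x y' else 0 := by
  have hsplit (y' : Fin K) : (if π x y ≤ π x y' then π x y' else 0) =
      (if π x y < π x y' then π x y' else 0) + if y' = y then π x y else 0 := by
    rcases eq_or_ne y' y with rfl | hne
    · simp
    · simp [hne, (hinj.ne hne.symm).le_iff_lt]
  rw [Finset.sum_congr rfl fun y' _ => hsplit y', Finset.sum_add_distrib, Finset.sum_ite_eq']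
  simp [probMassAbove]

theorem sum_sub_probMassAbove (hsum : ∑ y, π x y = 1) (hinj : Function.Injective (π x))
    (f : ℝ → ℝ) :
    ∑ y, (f (probMassAbove π x y + π x y) - f (probMassAbove π x y)) = f 1 - f 0 := by
  set e := Tuple.sort (π x)
  have hmono : StrictMono (π x ∘ e) :=
    (Tuple.monotone_sort (π x)).strictMono_of_injective (hinj.comp e.injective)
  -- `T k` is the mass of the labels of rank at least `k` in increasing order of probability.
  set T : ℕ → ℝ := fun k => ∑ j : Fin K, if k ≤ (j : ℕ) then π x (e j) else 0
  have hT0 : T 0 = 1 := by simpa [T, Equiv.sum_comp e (π x)] using hsum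
  have hTK : T K = 0 := Finset.sum_eq_zero fun j _ => if_neg (by omega)
  have hρ (i : Fin K) : probMassAbove π x (e i) = T (i + 1) := by
    rw [probMassAbove, ← Equiv.sum_comp e]
    refine Finset.sum_congr rfl fun j _ => ?_
    simp only [show π x (e i) < π x (e j) ↔ i < j from hmono.lt_iff_lt, Fin.lt_def,
      Nat.succ_le_iff]
  have hρ_add (i : Fin K) : probMassAbove π x (e i) + π x (e i) = T i := by
    rw [probMassAbove_add_self hinj, ← Equiv.sum_comp e]
    refine Finset.sum_congr rfl fun j _ => ?_
    simp only [show π x (e i) ≤ π x (e j) ↔ i ≤ j from hmono.le_iff_le, Fin.le_def]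
  calc ∑ y, (f (probMassAbove π x y + π x y) - f (probMassAbove π x y))
      = ∑ i : Fin K, (f (T i) - f (T (i + 1))) := by
        rw [← Equiv.sum_comp e]
        exact Finset.sum_congr rfl fun i _ => by rw [hρ_add, hρ]
    _ = f 1 - f 0 := by
        rw [Fin.sum_univ_eq_sum_range (fun k => f (T k) - f (T (k + 1))),
          Finset.sum_range_sub', hT0, hTK]

end Tiling

lemma min_add_sub_min_eq_max_min {p ρ τ : ℝ} (hp : 0 ≤ p) :
    min τ (ρ + p) - min τ ρ = max 0 (min p (τ - ρ)) := by
  simp only [min_def, max_def]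
  split_ifs <;> linarith

lemma measureReal_setOf_add_mul_le_mul {p ρ τ : ℝ} (hp : 0 ≤ p) :
    (volume.restrict (Set.Icc (0 : ℝ) 1)).real {u | ρ + p * u ≤ τ} * p
      = min τ (ρ + p) - min τ ρ := by
  rw [min_add_sub_min_eq_max_min hp, mul_comm]
  rcases hp.eq_or_lt with rfl | hp
  · simp
  have hset : {u | ρ + p * u ≤ τ} ∩ Set.Icc 0 1 = Set.Icc 0 (min ((τ - ρ) / p) 1) := by
    ext u
    simp only [Set.mem_inter_iff, Set.mem_ofPred_eq, Set.mem_Icc, le_min_iff, le_div_iff₀ hp]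
    constructor <;> rintro ⟨h1, h2, h3⟩ <;> refine ⟨?_, ?_, ?_⟩ <;> linarith
  rw [measureReal_restrict_apply' measurableSet_Icc, hset, Real.volume_real_Icc, sub_zero,
    mul_max_of_nonneg _ _ hp.le, mul_min_of_nonneg _ _ hp.le, mul_div_cancel₀ _ hp.ne', mul_one,
    mul_zero, max_comm, min_comm]

theorem sum_measureReal_setOf_probMassAbove_add_mul_le_mul {d K : ℕ}
    {π : (Fin d → ℝ) → Fin K → ℝ} {x : Fin d → ℝ} (hnonneg : ∀ y, 0 ≤ π x y)
    (hsum : ∑ y, π x y = 1) (hinj : Function.Injective (π x)) {τ : ℝ} (hτ₀ : 0 ≤ τ)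
    (hτ₁ : τ ≤ 1) :
    ∑ y, (volume.restrict (Set.Icc (0 : ℝ) 1)).real
      {u | probMassAbove π x y + π x y * u ≤ τ} * π x y = τ := by
  simp only [measureReal_setOf_add_mul_le_mul (hnonneg _)]
  rw [sum_sub_probMassAbove hsum hinj (min τ), min_eq_left hτ₁, min_eq_right hτ₀, sub_zero]

lemma measurable_probMassAbove {d K : ℕ} {π : (Fin d → ℝ) → Fin K → ℝ}
    (hπ : ∀ y, Measurable fun x => π x y) (y : Fin K) :
    Measurable fun x => probMassAbove π x y :=
  Finset.measurable_sum _ fun y' _ =>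
    Measurable.ite (measurableSet_lt (hπ y) (hπ y')) (hπ y') measurable_const

lemma measurableSet_setOf_probMassAbove_add_mul_le {d K : ℕ} {π : (Fin d → ℝ) → Fin K → ℝ}
    (hπ : ∀ y, Measurable fun x => π x y) (τ : ℝ) :
    MeasurableSet {q : ((Fin d → ℝ) × Fin K) × ℝ |
      probMassAbove π q.1.1 q.1.2 + π q.1.1 q.1.2 * q.2 ≤ τ} := by
  have hπ_joint : Measurable fun w : (Fin d → ℝ) × Fin K => π w.1 w.2 :=
    measurable_from_prod_countable_left hπ
  have hρ_joint : Measurable fun w : (Fin d → ℝ) × Fin K => probMassAbove π w.1 w.2 :=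
    measurable_from_prod_countable_left (measurable_probMassAbove hπ)
  exact measurableSet_le ((hρ_joint.comp measurable_fst).add
    ((hπ_joint.comp measurable_fst).mul measurable_snd)) measurable_const

section Conditioning

variable {Ω : Type*} {mΩ : MeasurableSpace Ω} {μ : Measure Ω} [IsFiniteMeasure μ]

theorem condExp_comp_prodMk_ae_eq_integral_of_indepFun {β γ F : Type*}
    {mβ : MeasurableSpace β} [MeasurableSpace γ] [StandardBorelSpace γ] [Nonempty γ]
    [NormedAddCommGroup F] [NormedSpace ℝ F] [CompleteSpace F]
    {W : Ω → β} {U : Ω → γ} (hW : Measurable W) (hU : Measurable U) (hindep : IndepFun W U μ)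
    {f : β × γ → F} (hf : StronglyMeasurable f)
    (hf_int : Integrable (fun ω => f (W ω, U ω)) μ) :
    μ[fun ω => f (W ω, U ω) | mβ.comap W] =ᵐ[μ] fun ω => ∫ u, f (W ω, u) ∂(μ.map U) := by
  have hκ : condDistrib U W μ =ᵐ[μ.map W] Kernel.const β (μ.map U) := by
    rw [condDistrib_ae_eq_iff_measure_eq_compProd W hU.aemeasurable, Measure.compProd_const]
    exact (indepFun_iff_map_prod_eq_prod_map_map hW.aemeasurable hU.aemeasurable).mp hindep
  filter_upwards [condExp_prod_ae_eq_integral_condDistrib hW hU.aemeasurable hf hf_int,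
    ae_of_ae_map hW.aemeasurable hκ] with ω hcond hconst
  rw [hcond, hconst, Kernel.const_apply]

theorem condExp_indicator_prodMk_ae_eq_measureReal_of_indepFun {β γ : Type*}
    {mβ : MeasurableSpace β} [MeasurableSpace γ] [StandardBorelSpace γ] [Nonempty γ]
    {W : Ω → β} {U : Ω → γ} (hW : Measurable W) (hU : Measurable U) (hindep : IndepFun W U μ)
    {S : Set (β × γ)} (hS : MeasurableSet S) :
    μ[{ω | (W ω, U ω) ∈ S}.indicator fun _ => (1 : ℝ) | mβ.comap W]
      =ᵐ[μ] fun ω => (μ.map U).real (Prod.mk (W ω) ⁻¹' S) :=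
  (condExp_comp_prodMk_ae_eq_integral_of_indepFun hW hU hindep
    (f := S.indicator fun _ => (1 : ℝ)) (stronglyMeasurable_const.indicator hS)
    ((integrable_const (1 : ℝ)).indicator ((hW.prodMk hU) hS))).trans
    (.of_forall fun _ => integral_indicator_one (hS.preimage measurable_prodMk_left))

theorem condExp_comp_ae_eq_sum_mul_of_condExp_indicator {α ι : Type*}
    {mα : MeasurableSpace α} [Fintype ι] [MeasurableSpace ι] [MeasurableSingletonClass ι]
    {X : Ω → α} {Y : Ω → ι} (hX : Measurable X) (hY : Measurable Y) {p : α → ι → ℝ}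
    (hp : ∀ y, μ[{ω | Y ω = y}.indicator fun _ => (1 : ℝ) | mα.comap X]
      =ᵐ[μ] fun ω => p (X ω) y)
    {g : α → ι → ℝ} (hg : ∀ y, Measurable (g · y)) {C : ℝ} (hC : ∀ x y, ‖g x y‖ ≤ C) :
    μ[fun ω => g (X ω) (Y ω) | mα.comap X] =ᵐ[μ] fun ω => ∑ y, g (X ω) y * p (X ω) y := by
  classical
  set indicatorY : ι → Ω → ℝ := fun y => {ω | Y ω = y}.indicator fun _ => 1
  have hindicatorY (y : ι) : Integrable (indicatorY y) μ :=
    (integrable_const 1).indicator (hY (measurableSet_singleton y))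
  have hdecomp : (fun ω => g (X ω) (Y ω)) = ∑ y, (fun ω => g (X ω) y) * indicatorY y := by
    ext ω
    simp [indicatorY, Set.indicator_apply]
  have hterm (y : ι) : μ[(fun ω => g (X ω) y) * indicatorY y | mα.comap X]
      =ᵐ[μ] fun ω => g (X ω) y * p (X ω) y :=
    (condExp_stronglyMeasurable_mul_of_bound hX.comap_le
      ((hg y).comp (comap_measurable X)).stronglyMeasurable (hindicatorY y) C
      (.of_forall fun ω => hC _ y)).trans ((hp y).mono fun ω hω => congrArg (g (X ω) y * ·) hω)
  rw [hdecomp]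
  refine (condExp_finsetSum (fun y _ => (hindicatorY y).bdd_mul
    ((hg y).comp hX).aestronglyMeasurable (.of_forall fun ω => hC _ y)) _).trans ?_
  filter_upwards [ae_all_iff.2 hterm] with ω hω
  rw [Finset.sum_apply]
  exact Finset.sum_congr rfl fun y _ => hω y

end Conditioning

/-- **The oracle APS procedure has exact conditional coverage.**
If `π_x(y) = P(Y = y | X = x)` are the true conditional probabilities (distinct for each
`x`) and `U` is uniform on `[0,1]` independent of `(X, Y)`, then the oracle prediction set
`C(x, u, 1-α) = {y : ρ_x(y) + π_x(y)·u ≤ 1-α}` satisfies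
`P(Y ∈ C(X, U, 1-α) | X = x) = 1 - α` for (almost) every `x`. -/
theorem oracle_aps_conditional_coverage
    {Ω : Type*} [MeasurableSpace Ω] (μ : Measure Ω) [IsProbabilityMeasure μ]
    (d K : ℕ) (α : ℝ) (hα : α ∈ Set.Ioo (0 : ℝ) 1)
    (π : (Fin d → ℝ) → Fin K → ℝ)
    (hnonneg : ∀ x y, 0 ≤ π x y) (hsum : ∀ x, ∑ y : Fin K, π x y = 1)
    (hdistinct : ∀ x, Function.Injective (π x))
    (X : Ω → (Fin d → ℝ)) (Y : Ω → Fin K) (U : Ω → ℝ)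
    (hX : Measurable X) (hY : Measurable Y) (hU : Measurable U)
    (hπmeas : ∀ y : Fin K, Measurable fun x => π x y)
    -- π is the true conditional probability: P(Y = y | X) = π_X(y) a.e., for every y
    (htrue : ∀ y : Fin K,
      μ[(Set.indicator {ω | Y ω = y} fun _ => (1 : ℝ)) |
        MeasurableSpace.comap X inferInstance] =ᵐ[μ] fun ω => π (X ω) y)
    -- U is uniform on [0,1] and independent of (X, Y)
    (hunif : μ.map U = volume.restrict (Set.Icc (0 : ℝ) 1))
    (hUindep : IndepFun (fun ω => (X ω, Y ω)) U μ) :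
    μ[(Set.indicator
        {ω | probMassAbove π (X ω) (Y ω) + π (X ω) (Y ω) * U ω ≤ 1 - α}
        fun _ => (1 : ℝ)) |
      MeasurableSpace.comap X inferInstance] =ᵐ[μ] fun _ => 1 - α := by
  obtain ⟨hα₀, hα₁⟩ := hα
  have := Measure.isProbabilityMeasure_map (μ := μ) hU.aemeasurable
  set W : Ω → (Fin d → ℝ) × Fin K := fun ω => (X ω, Y ω)
  set S : Set (((Fin d → ℝ) × Fin K) × ℝ) :=
    {q | probMassAbove π q.1.1 q.1.2 + π q.1.1 q.1.2 * q.2 ≤ 1 - α}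
  have hS : MeasurableSet S := measurableSet_setOf_probMassAbove_add_mul_le hπmeas (1 - α)
  have hS_slice (y : Fin K) : Measurable fun x => (μ.map U).real (Prod.mk (x, y) ⁻¹' S) :=
    (measurable_measure_prodMk_left (hS.preimage
      ((measurable_fst.prodMk measurable_const).prodMk measurable_snd))).ennreal_toReal
  calc μ[{ω | (W ω, U ω) ∈ S}.indicator fun _ => (1 : ℝ) | MeasurableSpace.comap X inferInstance]
      =ᵐ[μ] μ[μ[{ω | (W ω, U ω) ∈ S}.indicator fun _ => (1 : ℝ) |
        MeasurableSpace.comap W inferInstance] | MeasurableSpace.comap X inferInstance] :=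
        (condExp_condExp_of_le (comap_measurable W).fst.comap_le (hX.prodMk hY).comap_le).symm
    _ =ᵐ[μ] μ[fun ω => (μ.map U).real (Prod.mk (W ω) ⁻¹' S) |
        MeasurableSpace.comap X inferInstance] :=
        condExp_congr_ae
          (condExp_indicator_prodMk_ae_eq_measureReal_of_indepFun (hX.prodMk hY) hU hUindep hS)
    _ =ᵐ[μ] fun ω => ∑ y, (μ.map U).real (Prod.mk (X ω, y) ⁻¹' S) * π (X ω) y :=
        condExp_comp_ae_eq_sum_mul_of_condExp_indicator hX hY htrue
          (g := fun x y => (μ.map U).real (Prod.mk (x, y) ⁻¹' S)) hS_slice (C := 1)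
          fun _ _ => by rw [Real.norm_of_nonneg measureReal_nonneg]; exact measureReal_le_one
    _ = fun _ => 1 - α := funext fun ω => by
        rw [hunif]
        exact sum_measureReal_setOf_probMassAbove_add_mul_le_mul (hnonneg _) (hsum _)
          (hdistinct _) (by linarith) (by linarith)
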